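/- arXiv:2405.05024 — 3 statements merged into one kernel-verified Lean document; each statement's English description precedes it below -/
import Mathlib

section
/- Let (X,d) be a metric space in which closed bounded sets can be covered by finitely many sets of arbitrarily small diameter on each bounded piece (e.g. X = ℝⁿ with a metric inducing the Euclidean topology, which is second countable), let Ω ⊆ X be open, A ⊆ Ω measurable, and f : Ω → Y a map into a metric space such that limsup_{y→x} d_Y(f(y),f(x))/d(y,x) < ∞ for every x ∈ A. Then there exists a countable partition of A into measurable sets A₁, A₂, … such that the restriction of f to each A_k is Lipschitz continuous. -/
open MeasureTheory Metric Set Filter Function ENNReal NNReal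

/-- a map with finite pointwise Lipschitz constant at every point of a
measurable set `A` admits a countable measurable partition of `A` into pieces on which
it is Lipschitz. -/
theorem stmt_7 {X Y : Type*} [MetricSpace X] [SecondCountableTopology X]
    [MeasurableSpace X] [BorelSpace X] [MetricSpace Y]
    (Ω A : Set X) (hΩ : IsOpen Ω) (hAΩ : A ⊆ Ω) (hA : MeasurableSet A)
    (f : X → Y)
    (hlip : ∀ x ∈ A,
      Filter.limsup (fun y => ENNReal.ofReal (dist (f y) (f x) / dist y x))
        (nhdsWithin x (Ω \ {x})) < ⊤) :
    ∃ P : ℕ → Set X, (⋃ k, P k) = A ∧ Pairwise (Disjoint on P) ∧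
      ∀ k, MeasurableSet (P k) ∧ ∃ K : ℝ≥0, LipschitzOnWith K f (P k) := by
  rcases isEmpty_or_nonempty X with hX | hX
  · refine ⟨fun _ => ∅, ?_, ?_, ?_⟩
    · simp [Set.eq_empty_of_isEmpty A]
    · intro i j _; simp [Function.onFun]
    · intro k; exact ⟨MeasurableSet.empty, 1, by simp [LipschitzOnWith]⟩
  -- the sets C j
  set C : ℕ → Set X := fun j =>
    {z | z ∈ Ω ∧ ∀ y ∈ Ω, dist y z < 1 / (j + 1) →
      dist (f y) (f z) ≤ (j + 1) * dist y z} with hC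
  -- positivity of 1/(j+1)
  have hpos : ∀ j : ℕ, (0 : ℝ) < 1 / (j + 1) := by
    intro j; positivity
  -- C j is relatively closed in Ω, hence measurable
  have hCmeas : ∀ j, MeasurableSet (C j) := by
    intro j
    have hCeq : C j = closure (C j) ∩ Ω := by
      apply Subset.antisymm
      · exact fun z hz => ⟨subset_closure hz, hz.1⟩
      · rintro z ⟨hzc, hzΩ⟩
        refine ⟨hzΩ, fun y hyΩ hyz => ?_⟩
        -- approximate z by points of C j
        refine le_of_forall_pos_le_add fun ε hε => ?_
        set δ : ℝ := min (min (1 / (j + 1) - dist y z) (1 / (2 * (j + 1))))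
          (ε / (2 * (j + 1))) with hδ
        have hδpos : 0 < δ := by
          refine lt_min (lt_min (by linarith) (by positivity)) (by positivity)
        obtain ⟨w, hw, hwz⟩ := Metric.mem_closure_iff.mp hzc δ hδpos
        -- dist z w < 1/(j+1)
        have h1 : dist z w < 1 / (j + 1) := by
          have : δ ≤ 1 / (2 * (j + 1)) := le_trans (min_le_left _ _) (min_le_right _ _)
          have h2 : 1 / (2 * (j + 1)) < 1 / ((j : ℝ) + 1) := by
            apply div_lt_div_of_pos_left one_pos (by positivity); linarith [hpos j]
          linarith
        have h2 : dist y w < 1 / (j + 1) := by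
          have hd : δ ≤ 1 / (j + 1) - dist y z :=
            le_trans (min_le_left _ _) (min_le_left _ _)
          calc dist y w ≤ dist y z + dist z w := dist_triangle _ _ _
            _ < dist y z + δ := by linarith
            _ ≤ 1 / (j + 1) := by linarith
        have hfy := hw.2 y hyΩ h2
        have hfz := hw.2 z hzΩ h1
        have hδε : δ ≤ ε / (2 * (j + 1)) := min_le_right _ _
        calc dist (f y) (f z) ≤ dist (f y) (f w) + dist (f w) (f z) := dist_triangle _ _ _
          _ ≤ (j + 1) * dist y w + (j + 1) * dist z w := by
              rw [dist_comm (f w)]; exact add_le_add hfy hfz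
          _ ≤ (j + 1) * (dist y z + δ) + (j + 1) * δ := by
              have hj : (0 : ℝ) ≤ j + 1 := by positivity
              have : dist y w ≤ dist y z + δ := by
                have := dist_triangle y z w; linarith
              gcongr <;> exact le_of_lt hwz
          _ = (j + 1) * dist y z + 2 * (j + 1) * δ := by ring
          _ ≤ (j + 1) * dist y z + ε := by
              have hj : (0 : ℝ) < 2 * (j + 1) := by positivity
              have : 2 * (j + 1) * δ ≤ 2 * (j + 1) * (ε / (2 * (j + 1))) := by gcongr
              rw [mul_div_cancel₀ _ (ne_of_gt hj)] at this
              linarith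
    rw [hCeq]
    exact isClosed_closure.measurableSet.inter hΩ.measurableSet
  -- every point of A is in some C j
  have hcover : ∀ x ∈ A, ∃ j, x ∈ C j := by
    intro x hx
    obtain ⟨n, hn⟩ := ENNReal.exists_nat_gt (hlip x hx).ne
    have hev : ∀ᶠ y in nhdsWithin x (Ω \ {x}),
        ENNReal.ofReal (dist (f y) (f x) / dist y x) < n :=
      eventually_lt_of_limsup_lt hn
    obtain ⟨ε, hε, hball⟩ := Metric.mem_nhdsWithin_iff.mp hev
    obtain ⟨j, hj⟩ := exists_nat_gt (max (n : ℝ) (1 / ε))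
    have hjn : (n : ℝ) ≤ j + 1 := le_trans (le_max_left _ _) (by linarith [hj])
    have hjε : 1 / ((j : ℝ) + 1) < ε := by
      have h1 : 1 / ε < (j : ℝ) + 1 := lt_trans (lt_of_le_of_lt (le_max_right _ _) hj)
        (by linarith)
      rw [div_lt_iff₀ (by positivity)]
      rw [div_lt_iff₀ hε] at h1
      linarith
    refine ⟨j, hAΩ hx, fun y hyΩ hyx => ?_⟩
    by_cases hxy : y = x
    · simp [hxy]
    · have hmem : y ∈ ball x ε ∩ (Ω \ {x}) := by
        refine ⟨?_, hyΩ, hxy⟩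
        rw [mem_ball]; exact lt_trans hyx hjε
      have := hball hmem
      rw [Set.mem_setOf_eq] at this
      have hd : (0 : ℝ) < dist y x := dist_pos.mpr hxy
      have hlt : dist (f y) (f x) / dist y x < n := by
        rw [← ENNReal.ofReal_natCast] at this
        exact (ENNReal.ofReal_lt_ofReal_iff_of_nonneg (by positivity)).mp this
      rw [div_lt_iff₀ hd] at hlt
      calc dist (f y) (f x) ≤ n * dist y x := le_of_lt hlt
        _ ≤ (j + 1) * dist y x := by gcongr
  -- countable dense set gives a cover by small balls
  obtain ⟨s, hs_count, hs_dense⟩ := TopologicalSpace.exists_countable_dense X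
  have hs_ne : s.Nonempty := hs_dense.nonempty
  obtain ⟨c, hc⟩ := hs_count.exists_eq_range hs_ne
  have hballs : ∀ (r : ℝ), 0 < r → ∀ x : X, ∃ n, x ∈ ball (c n) r := by
    intro r hr x
    obtain ⟨y, hy, hxy⟩ := Metric.dense_iff.mp hs_dense x r hr
    rw [hc] at hxy
    obtain ⟨n, rfl⟩ := hxy
    exact ⟨n, by rwa [mem_ball, dist_comm]⟩
  -- the pieces
  set e : ℕ ≃ ℕ × ℕ := (Denumerable.eqv (ℕ × ℕ)).symm with he
  set E : ℕ × ℕ → Set X := fun p =>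
    A ∩ C p.1 ∩ ball (c p.2) (1 / (2 * (p.1 + 1))) with hE
  set F : ℕ → Set X := fun k => E (e k) with hF
  refine ⟨disjointed F, ?_, disjoint_disjointed F, fun k => ?_⟩
  · rw [iUnion_disjointed]
    apply Subset.antisymm
    · refine iUnion_subset fun k => ?_
      exact fun x hx => hx.1.1
    · intro x hx
      obtain ⟨j, hj⟩ := hcover x hx
      obtain ⟨n, hn⟩ := hballs (1 / (2 * ((j : ℝ) + 1))) (by positivity) x
      refine mem_iUnion.mpr ⟨e.symm (j, n), ?_⟩
      simp only [hF, Equiv.apply_symm_apply]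
      exact ⟨⟨hx, hj⟩, hn⟩
  · constructor
    · refine MeasurableSet.disjointed (fun i => ?_) k
      exact ((hA.inter (hCmeas _)).inter measurableSet_ball)
    · set j := (e k).1 with hj
      refine ⟨(j : ℝ≥0) + 1, ?_⟩
      refine LipschitzOnWith.of_dist_le_mul fun x hx y hy => ?_
      have hx' : x ∈ E (e k) := disjointed_subset F k hx
      have hy' : y ∈ E (e k) := disjointed_subset F k hy
      have hdist : dist y x < 1 / ((j : ℝ) + 1) := by
        have h1 : dist x (c (e k).2) < 1 / (2 * ((j : ℝ) + 1)) := mem_ball.mp hx'.2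
        have h2 : dist y (c (e k).2) < 1 / (2 * ((j : ℝ) + 1)) := mem_ball.mp hy'.2
        have h3 : dist y x ≤ dist y (c (e k).2) + dist x (c (e k).2) := by
          rw [dist_comm x]; exact dist_triangle _ _ _
        have h4 : 1 / (2 * ((j : ℝ) + 1)) + 1 / (2 * ((j : ℝ) + 1)) = 1 / ((j : ℝ) + 1) := by
          rw [← add_div, div_eq_div_iff (by positivity) (by positivity)]; ring
        linarith
      have hyΩ : y ∈ Ω := hAΩ hy'.1.1
      have := hx'.1.2.2 y hyΩ hdist
      rw [dist_comm (f y) (f x), dist_comm y x] at this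
      calc dist (f x) (f y) ≤ ((j : ℝ) + 1) * dist x y := this
        _ = ((j : ℝ≥0) + 1 : ℝ≥0) * dist x y := by push_cast; ring
end

section
/- Riesz-potential Orlicz estimate (Euclidean model case): let n ≥ 2, let Ω ⊆ ℝⁿ, let g : Ω → [0,∞) be measurable, let φ : (0,∞) → (0,∞) be nonincreasing, and define F_φ(s) := s·φ(s)^{(1/n)−1} for s > 0, F_φ(0) := 0. Then for every z ∈ Ω and every measurable E ⊆ Ω, ( ∫_E |x−z|^{1−n} g(x) dx )ⁿ ≤ C_n ( ∫₀^∞ φ(s)^{1/n} ds )^{n−1} ∫_E F_φ(g(x)) dx, where C_n = (1 + σ_{n−1})ⁿ and σ_{n−1} is the surface measure of the unit sphere of ℝⁿ. -/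
open MeasureTheory Metric Set ENNReal

theorem my_lintegral_polar {E : Type*} [NormedAddCommGroup E] [NormedSpace ℝ E] [MeasurableSpace E]
    [BorelSpace E] [Nontrivial E] (μ : Measure E) [FiniteDimensional ℝ E] [μ.IsAddHaarMeasure]
    (f : ℝ → ℝ≥0∞) (hf : Measurable f) :
    ∫⁻ x, f ‖x‖ ∂μ = (Module.finrank ℝ E) * μ (ball 0 1)
      * ∫⁻ y in Ioi (0:ℝ), ENNReal.ofReal (y ^ (Module.finrank ℝ E - 1)) * f y := by
  have hmeas : Measurable fun p : sphere (0:E) 1 × Ioi (0:ℝ) => f p.2 :=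
    hf.comp (measurable_subtype_coe.comp measurable_snd)
  calc
    ∫⁻ x, f ‖x‖ ∂μ = ∫⁻ x : ({(0)}ᶜ : Set E), f (‖x.1‖) ∂(μ.comap (↑)) := by
      rw [lintegral_subtype_comap (measurableSet_singleton (0:E)).compl (fun x => f ‖x‖),
        MeasureTheory.restrict_compl_singleton]
    _ = ∫⁻ p : sphere (0:E) 1 × Ioi (0:ℝ), f p.2
        ∂μ.toSphere.prod (.volumeIoiPow (Module.finrank ℝ E - 1)) := by
      simpa only [homeomorphUnitSphereProd_apply_snd_coe] using
        μ.measurePreserving_homeomorphUnitSphereProd.lintegral_comp hmeas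
    _ = μ.toSphere univ * ∫⁻ r : Ioi (0:ℝ), f r ∂(Measure.volumeIoiPow (Module.finrank ℝ E - 1)) := by
      rw [lintegral_prod (fun p : sphere (0:E) 1 × Ioi (0:ℝ) => f p.2) hmeas.aemeasurable]
      exact (lintegral_const
        (∫⁻ r : Ioi (0:ℝ), f ↑r ∂(Measure.volumeIoiPow (Module.finrank ℝ E - 1)))).trans
        (mul_comm _ _)
    _ = _ := by
      rw [Measure.toSphere_apply_univ,
        ← lintegral_subtype_comap measurableSet_Ioi
          (fun y => ENNReal.ofReal (y ^ (Module.finrank ℝ E - 1)) * f y)]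
      congr 1
      exact (lintegral_withDensity_eq_lintegral_mul _ (by fun_prop)
        (hf.comp measurable_subtype_coe)).trans (lintegral_congr fun r => rfl)

theorem my_ball_int (n : ℕ) (hn : 2 ≤ n) (z : EuclideanSpace ℝ (Fin n)) (R : ℝ) :
    ∫⁻ x in closedBall z R, ENNReal.ofReal (‖x - z‖ ^ (1 - (n:ℝ))) =
      (n : ℝ≥0∞) * volume (ball (0 : EuclideanSpace ℝ (Fin n)) 1) * ENNReal.ofReal R := by
  haveI : Nonempty (Fin n) := ⟨⟨0, by omega⟩⟩
  haveI : Nontrivial (EuclideanSpace ℝ (Fin n)) := inferInstance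
  set f : ℝ → ℝ≥0∞ := fun r => if r ≤ R then ENNReal.ofReal (r ^ (1 - (n:ℝ))) else 0 with hf
  have hfm : Measurable f := Measurable.ite measurableSet_Iic (by fun_prop) measurable_const
  have h1 : ∫⁻ x in closedBall z R, ENNReal.ofReal (‖x - z‖ ^ (1 - (n:ℝ)))
      = ∫⁻ x : EuclideanSpace ℝ (Fin n), f ‖x‖ := by
    rw [← lintegral_indicator (measurableSet_closedBall)]
    rw [← lintegral_add_right_eq_self (fun x => f ‖x‖) (-z)]
    refine lintegral_congr fun x => ?_
    by_cases hx : x ∈ closedBall z R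
    · rw [indicator_of_mem hx]
      have h' : ‖x - z‖ ≤ R := mem_closedBall_iff_norm.mp hx
      show _ = f ‖x + -z‖
      rw [← sub_eq_add_neg, hf]
      exact (if_pos h').symm
    · rw [indicator_of_notMem hx]
      have : ¬ (‖x + -z‖ ≤ R) := by
        rw [← sub_eq_add_neg]; exact fun h => hx (mem_closedBall_iff_norm.mpr h)
      simp only [hf, this, if_false]
  rw [h1, my_lintegral_polar volume f hfm, finrank_euclideanSpace_fin]
  congr 1
  have h2 : ∫⁻ y in Ioi (0:ℝ), ENNReal.ofReal (y ^ (n - 1)) * f y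
      = ∫⁻ y in Ioi (0:ℝ), (Iic R).indicator (fun _ => (1:ℝ≥0∞)) y := by
    refine setLIntegral_congr_fun measurableSet_Ioi (fun y hy => ?_)
    have hy' : (0:ℝ) < y := hy
    by_cases hyR : y ≤ R
    · rw [hf]; simp only [hyR, if_true, indicator_of_mem (mem_Iic.mpr hyR)]
      rw [← ENNReal.ofReal_mul (by positivity)]
      rw [← Real.rpow_natCast y (n-1)]
      rw [← Real.rpow_add hy']
      norm_num
      rw [Nat.cast_sub (by omega)]
      norm_num
    · rw [hf]; simp [hyR]
  rw [h2, lintegral_indicator measurableSet_Iic, setLIntegral_one,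
    Measure.restrict_apply measurableSet_Iic,
    Set.inter_comm, Set.Ioi_inter_Iic, Real.volume_Ioc, sub_zero]

theorem my_psi (φ : ℝ → ℝ) (hφanti : AntitoneOn φ (Set.Ioi 0)) :
    ∃ ψ : ℝ → ℝ, Measurable ψ ∧ ∀ s : ℝ, 0 < s → ψ s = φ s := by
  refine ⟨fun s => if s ≤ 0 then φ 1 else φ s, ?_, fun s hs => by simp [not_le.mpr hs]⟩
  have hk : ∀ k : ℕ, Measurable fun s : ℝ =>
      if s ≤ 0 then φ 1 else φ (max s ((k:ℝ)+1)⁻¹) := by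
    intro k
    have hmax : Antitone fun s : ℝ => φ (max s ((k:ℝ)+1)⁻¹) := by
      intro s t hst
      exact hφanti (mem_Ioi.mpr (lt_max_of_lt_right (by positivity)))
        (mem_Ioi.mpr (lt_max_of_lt_right (by positivity))) (max_le_max hst le_rfl)
    exact Measurable.ite measurableSet_Iic measurable_const hmax.measurable
  refine measurable_of_tendsto_metrizable hk ?_
  rw [tendsto_pi_nhds]
  intro s
  rcases le_or_gt s 0 with hs | hs
  · simp only [hs, if_true]
    exact tendsto_const_nhds
  · apply tendsto_const_nhds.congr'
    filter_upwards [Filter.eventually_ge_atTop ⌈s⁻¹⌉₊] with k hk'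
    have : ((k:ℝ)+1)⁻¹ ≤ s := by
      rw [inv_le_comm₀ (by positivity) hs]
      calc s⁻¹ ≤ (⌈s⁻¹⌉₊ : ℝ) := Nat.le_ceil _
        _ ≤ (k:ℝ) + 1 := by
            have := Nat.cast_le (α := ℝ) |>.mpr hk'
            linarith
    simp [not_le.mpr hs, max_eq_left this]

/-- Riesz-potential Orlicz estimate in ℝⁿ:
`(∫_E |x−z|^{1−n} g)ⁿ ≤ (1+σ_{n−1})ⁿ (∫₀^∞ φ^{1/n})^{n−1} ∫_E F_φ(g)`,
with `σ_{n−1} = n·ω_n` the surface measure of the unit sphere and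
`F_φ(s) = s·φ(s)^{1/n − 1}` for `s > 0`, `F_φ(0) = 0`. -/
theorem stmt_10 (n : ℕ) (hn : 2 ≤ n) (Ω : Set (EuclideanSpace ℝ (Fin n)))
    (g : EuclideanSpace ℝ (Fin n) → ℝ) (hg : Measurable g) (hg0 : ∀ x, 0 ≤ g x)
    (φ : ℝ → ℝ) (hφpos : ∀ t : ℝ, 0 < t → 0 < φ t) (hφanti : AntitoneOn φ (Set.Ioi 0))
    (z : EuclideanSpace ℝ (Fin n)) (hz : z ∈ Ω)
    (E : Set (EuclideanSpace ℝ (Fin n))) (hE : MeasurableSet E) (hEΩ : E ⊆ Ω) :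
    (∫⁻ x in E, ENNReal.ofReal (‖x - z‖ ^ (1 - (n : ℝ)) * g x)) ^ (n : ℝ)
      ≤ ENNReal.ofReal
          ((1 + (n : ℝ) * (volume (Metric.ball (0 : EuclideanSpace ℝ (Fin n)) 1)).toReal) ^ n)
        * (∫⁻ t in Set.Ioi (0 : ℝ), ENNReal.ofReal (φ t ^ (1 / (n : ℝ)))) ^ ((n : ℝ) - 1)
        * ∫⁻ x in E,
            ENNReal.ofReal (if 0 < g x then g x * φ (g x) ^ (1 / (n : ℝ) - 1) else 0) := by
  have hn2 : (2:ℝ) ≤ (n:ℝ) := by exact_mod_cast hn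
  have hn0 : (0:ℝ) < n := by linarith
  have hn' : (n:ℝ) ≠ 0 := hn0.ne'
  obtain ⟨ψ, hψm, hψ⟩ := my_psi φ hφanti
  have hψpos : ∀ s : ℝ, 0 < s → 0 < ψ s := fun s hs => (hψ s hs).symm ▸ hφpos s hs
  have hψanti : ∀ s t : ℝ, 0 < s → s ≤ t → ψ t ≤ ψ s := fun s t hs hst => by
    rw [hψ s hs, hψ t (hs.trans_le hst)]
    exact hφanti (mem_Ioi.mpr hs) (mem_Ioi.mpr (hs.trans_le hst)) hst
  set σ : ℝ := (n : ℝ) * (volume (Metric.ball (0 : EuclideanSpace ℝ (Fin n)) 1)).toReal with hσ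
  have hσ0 : 0 ≤ σ := by positivity
  set I₁ := ∫⁻ t in Set.Ioi (0 : ℝ), ENNReal.ofReal (φ t ^ (1 / (n : ℝ))) with hI₁def
  set I₂ := ∫⁻ x in E,
      ENNReal.ofReal (if 0 < g x then g x * φ (g x) ^ (1 / (n : ℝ) - 1) else 0) with hI₂def
  have hI₁ψ : I₁ = ∫⁻ t in Set.Ioi (0:ℝ), ENNReal.ofReal (ψ t ^ (1 / (n:ℝ))) :=
    setLIntegral_congr_fun measurableSet_Ioi
      (fun t ht => by rw [hψ t ht])
  have hI₂ψ : I₂ = ∫⁻ x in E,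
      ENNReal.ofReal (if 0 < g x then g x * ψ (g x) ^ (1 / (n:ℝ) - 1) else 0) := by
    refine lintegral_congr fun x => ?_
    by_cases h : 0 < g x
    · simp only [h, if_true, hψ _ h]
    · simp only [h, if_false]
  have hI₂m : Measurable fun x => ENNReal.ofReal
      (if 0 < g x then g x * ψ (g x) ^ (1 / (n:ℝ) - 1) else 0) := by
    apply Measurable.ennreal_ofReal
    exact Measurable.ite (measurableSet_lt measurable_const hg)
      (hg.mul (by fun_prop)) measurable_const
  have hI₁pos : I₁ ≠ 0 := by
    have hlow : ENNReal.ofReal (φ 2 ^ (1/(n:ℝ))) * volume (Ioo (1:ℝ) 2) ≤ I₁ := by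
      rw [hI₁ψ]
      calc ENNReal.ofReal (φ 2 ^ (1/(n:ℝ))) * volume (Ioo (1:ℝ) 2)
          = ∫⁻ _ in Ioo (1:ℝ) 2, ENNReal.ofReal (φ 2 ^ (1/(n:ℝ))) := (setLIntegral_const _ _).symm
        _ ≤ ∫⁻ t in Ioo (1:ℝ) 2, ENNReal.ofReal (ψ t ^ (1/(n:ℝ))) := by
            refine setLIntegral_mono (by fun_prop) fun t ht => ?_
            refine ENNReal.ofReal_le_ofReal ?_
            have ht0 : (0:ℝ) < t := lt_trans one_pos ht.1
            rw [hψ t ht0]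
            exact Real.rpow_le_rpow (hφpos 2 two_pos).le
              (hφanti (mem_Ioi.mpr ht0) (mem_Ioi.mpr two_pos) ht.2.le) (by positivity)
        _ ≤ ∫⁻ t in Ioi (0:ℝ), ENNReal.ofReal (ψ t ^ (1/(n:ℝ))) :=
            lintegral_mono_set fun t ht => lt_trans one_pos ht.1
    intro h0
    rw [h0] at hlow
    have h1 : ENNReal.ofReal (φ 2 ^ (1/(n:ℝ))) * volume (Ioo (1:ℝ) 2) ≠ 0 := by
      rw [Real.volume_Ioo]
      refine mul_ne_zero ?_ ?_
      · simp only [ne_eq, ENNReal.ofReal_eq_zero, not_le]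
        exact Real.rpow_pos_of_pos (hφpos 2 two_pos) _
      · simp only [ne_eq, ENNReal.ofReal_eq_zero, not_le]; norm_num
    exact h1 (le_antisymm hlow (zero_le))
  by_cases hI₂0 : I₂ = 0
  · have h0 : (fun x => ENNReal.ofReal
        (if 0 < g x then g x * ψ (g x) ^ (1 / (n:ℝ) - 1) else 0)) =ᵐ[volume.restrict E] 0 := by
      rw [hI₂ψ] at hI₂0
      exact (lintegral_eq_zero_iff' hI₂m.aemeasurable).mp hI₂0
    have hLHS0 : (∫⁻ x in E, ENNReal.ofReal (‖x - z‖ ^ (1 - (n : ℝ)) * g x)) = 0 := by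
      have : (fun x => ENNReal.ofReal (‖x - z‖ ^ (1 - (n : ℝ)) * g x))
          =ᵐ[volume.restrict E] 0 := by
        filter_upwards [h0] with x hx
        by_cases hgx : 0 < g x
        · exfalso
          simp only [hgx, if_true, Pi.zero_apply, ENNReal.ofReal_eq_zero] at hx
          have : 0 < g x * ψ (g x) ^ (1/(n:ℝ) - 1) :=
            mul_pos hgx (Real.rpow_pos_of_pos (hψpos _ hgx) _)
          linarith
        · have hx0 : g x = 0 := le_antisymm (not_lt.mp hgx) (hg0 x)
          simp [hx0]
      rw [lintegral_congr_ae this]; simp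
    rw [hLHS0, ENNReal.zero_rpow_of_pos hn0]
    exact zero_le
  by_cases hI₁top : I₁ = ⊤
  · have hC : ENNReal.ofReal ((1 + σ) ^ n) ≠ 0 := by
      simp only [ne_eq, ENNReal.ofReal_eq_zero, not_le]
      positivity
    rw [hI₁top, ENNReal.top_rpow_of_pos (by linarith), ENNReal.mul_top hC,
      ENNReal.top_mul hI₂0]
    exact le_top
  by_cases hI₂top : I₂ = ⊤
  · have hC : ENNReal.ofReal ((1 + σ) ^ n) ≠ 0 := by
      simp only [ne_eq, ENNReal.ofReal_eq_zero, not_le]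
      positivity
    have hI₁r : I₁ ^ ((n:ℝ) - 1) ≠ 0 := by
      simp only [ne_eq, ENNReal.rpow_eq_zero_iff, not_or]
      exact ⟨fun h => hI₁pos h.1, fun h => hI₁top h.1⟩
    rw [hI₂top, ENNReal.mul_top (mul_ne_zero hC hI₁r)]
    exact le_top
  -- Main case
  set a := I₂.toReal with ha_def
  set b := I₁.toReal with hb_def
  have ha : 0 < a := ENNReal.toReal_pos hI₂0 hI₂top
  have hb : 0 < b := ENNReal.toReal_pos hI₁pos hI₁top
  have hI₂a : I₂ = ENNReal.ofReal a := (ENNReal.ofReal_toReal hI₂top).symm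
  have hI₁b : I₁ = ENNReal.ofReal b := (ENNReal.ofReal_toReal hI₁top).symm
  set lam := (a / b) ^ (1 / (n:ℝ)) with hlam_def
  have hlam0 : 0 < lam := Real.rpow_pos_of_pos (div_pos ha hb) _
  set c : EuclideanSpace ℝ (Fin n) → ℝ≥0∞ :=
    fun x => ENNReal.ofReal (‖x - z‖ ^ (1 - (n:ℝ))) with hc
  have hcm : Measurable c := by fun_prop
  set FA : EuclideanSpace ℝ (Fin n) × ℝ → ℝ≥0∞ := fun p =>
    if 0 < p.2 ∧ p.2 < g p.1 ∧ lam * ψ p.2 ^ (1/(n:ℝ)) < ‖p.1 - z‖ then c p.1 else 0 with hFA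
  set FB : EuclideanSpace ℝ (Fin n) × ℝ → ℝ≥0∞ := fun p =>
    if 0 < p.2 ∧ p.2 < g p.1 ∧ ‖p.1 - z‖ ≤ lam * ψ p.2 ^ (1/(n:ℝ)) then c p.1 else 0 with hFB
  have hnorm : Measurable fun p : EuclideanSpace ℝ (Fin n) × ℝ => ‖p.1 - z‖ := by fun_prop
  have hRm : Measurable fun p : EuclideanSpace ℝ (Fin n) × ℝ =>
      lam * ψ p.2 ^ (1/(n:ℝ)) := by fun_prop
  have hsetA : MeasurableSet {p : EuclideanSpace ℝ (Fin n) × ℝ |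
      0 < p.2 ∧ p.2 < g p.1 ∧ lam * ψ p.2 ^ (1/(n:ℝ)) < ‖p.1 - z‖} :=
    (measurableSet_lt measurable_const measurable_snd).inter
      ((measurableSet_lt measurable_snd (hg.comp measurable_fst)).inter
        (measurableSet_lt hRm hnorm))
  have hsetB : MeasurableSet {p : EuclideanSpace ℝ (Fin n) × ℝ |
      0 < p.2 ∧ p.2 < g p.1 ∧ ‖p.1 - z‖ ≤ lam * ψ p.2 ^ (1/(n:ℝ))} :=
    (measurableSet_lt measurable_const measurable_snd).inter
      ((measurableSet_lt measurable_snd (hg.comp measurable_fst)).inter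
        (measurableSet_le hnorm hRm))
  have hFAm : Measurable FA := Measurable.ite hsetA (hcm.comp measurable_fst) measurable_const
  have hFBm : Measurable FB := Measurable.ite hsetB (hcm.comp measurable_fst) measurable_const
  -- Step 1: decompose
  have hLHS : (∫⁻ x in E, ENNReal.ofReal (‖x - z‖ ^ (1 - (n : ℝ)) * g x))
      = (∫⁻ x in E, ∫⁻ s, FA (x, s)) + (∫⁻ x in E, ∫⁻ s, FB (x, s)) := by
    rw [← lintegral_add_left hFAm.lintegral_prod_right']
    refine lintegral_congr fun x => ?_
    rw [← lintegral_add_left (show Measurable fun s : ℝ => FA (x, s) from hFAm.comp measurable_prodMk_left)]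
    have hpt : ∀ s : ℝ, FA (x, s) + FB (x, s)
        = (Ioo (0:ℝ) (g x)).indicator (fun _ => c x) s := by
      intro s
      by_cases h1 : 0 < s ∧ s < g x
      · rcases lt_or_ge (lam * ψ s ^ (1/(n:ℝ))) ‖x - z‖ with h2 | h2
        · rw [hFA, hFB]
          simp only
          rw [if_pos ⟨h1.1, h1.2, h2⟩, if_neg (fun h => absurd h.2.2 (not_le.mpr h2)),
            indicator_of_mem (mem_Ioo.mpr h1), add_zero]
        · rw [hFA, hFB]
          simp only
          rw [if_neg (fun h => absurd h.2.2 (not_lt.mpr h2)), if_pos ⟨h1.1, h1.2, h2⟩,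
            indicator_of_mem (mem_Ioo.mpr h1), zero_add]
      · rw [hFA, hFB]
        simp only
        rw [if_neg (fun h => h1 ⟨h.1, h.2.1⟩), if_neg (fun h => h1 ⟨h.1, h.2.1⟩),
          indicator_of_notMem (fun h => h1 (mem_Ioo.mp h)), add_zero]
    rw [lintegral_congr hpt, lintegral_indicator measurableSet_Ioo, setLIntegral_const,
      Real.volume_Ioo, sub_zero, hc]
    exact ENNReal.ofReal_mul (Real.rpow_nonneg (norm_nonneg _) _)
  -- Piece A
  have hPA : (∫⁻ x in E, ∫⁻ s, FA (x, s)) ≤ ENNReal.ofReal (lam ^ (1 - (n:ℝ))) * I₂ := by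
    rw [hI₂ψ, ← lintegral_const_mul' _ _ ENNReal.ofReal_ne_top]
    refine lintegral_mono fun x => ?_
    by_cases hgx : 0 < g x
    · have key : ∀ s : ℝ, FA (x, s) ≤ (Ioo (0:ℝ) (g x)).indicator
          (fun _ => ENNReal.ofReal (lam ^ (1 - (n:ℝ)) * ψ (g x) ^ (1/(n:ℝ) - 1))) s := by
        intro s
        rw [hFA]
        simp only
        split_ifs with h
        · obtain ⟨hs0, hsg, hlt⟩ := h
          rw [indicator_of_mem (mem_Ioo.mpr ⟨hs0, hsg⟩), hc]
          refine ENNReal.ofReal_le_ofReal ?_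
          have hψs : 0 < ψ s := hψpos s hs0
          have hls : 0 < lam * ψ s ^ (1/(n:ℝ)) :=
            mul_pos hlam0 (Real.rpow_pos_of_pos hψs _)
          have hexp : (1/(n:ℝ)) * (1 - (n:ℝ)) = 1/(n:ℝ) - 1 := by field_simp
          calc ‖x - z‖ ^ (1 - (n:ℝ))
              ≤ (lam * ψ s ^ (1/(n:ℝ))) ^ (1 - (n:ℝ)) :=
                Real.rpow_le_rpow_of_nonpos hls hlt.le (by linarith)
            _ = lam ^ (1 - (n:ℝ)) * (ψ s ^ (1/(n:ℝ))) ^ (1 - (n:ℝ)) :=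
                Real.mul_rpow hlam0.le (Real.rpow_nonneg hψs.le _)
            _ = lam ^ (1 - (n:ℝ)) * ψ s ^ (1/(n:ℝ) - 1) := by
                rw [← Real.rpow_mul hψs.le, hexp]
            _ ≤ lam ^ (1 - (n:ℝ)) * ψ (g x) ^ (1/(n:ℝ) - 1) := by
                refine mul_le_mul_of_nonneg_left ?_ (Real.rpow_nonneg hlam0.le _)
                exact Real.rpow_le_rpow_of_nonpos (hψpos _ hgx)
                  (hψanti s (g x) hs0 hsg.le) (by rw [← hexp]; nlinarith [one_div_pos.mpr hn0])
        · exact zero_le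
      calc ∫⁻ s, FA (x, s)
          ≤ ∫⁻ s, (Ioo (0:ℝ) (g x)).indicator
            (fun _ => ENNReal.ofReal (lam ^ (1 - (n:ℝ)) * ψ (g x) ^ (1/(n:ℝ) - 1))) s :=
            lintegral_mono key
        _ = ENNReal.ofReal (lam ^ (1 - (n:ℝ)) * ψ (g x) ^ (1/(n:ℝ) - 1))
            * ENNReal.ofReal (g x) := by
            rw [lintegral_indicator measurableSet_Ioo, setLIntegral_const,
              Real.volume_Ioo, sub_zero]
        _ = ENNReal.ofReal (lam ^ (1 - (n:ℝ)))
            * ENNReal.ofReal (if 0 < g x then g x * ψ (g x) ^ (1/(n:ℝ) - 1) else 0) := by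
            rw [if_pos hgx,
              ← ENNReal.ofReal_mul (mul_nonneg (Real.rpow_nonneg hlam0.le _)
                (Real.rpow_nonneg (hψpos _ hgx).le _)),
              ← ENNReal.ofReal_mul (Real.rpow_nonneg hlam0.le _)]
            congr 1
            ring
    · have hgx0 : g x = 0 := le_antisymm (not_lt.mp hgx) (hg0 x)
      have hz0 : ∀ s : ℝ, FA (x, s) = 0 := by
        intro s
        rw [hFA]
        refine if_neg ?_
        rintro ⟨hs0, hsg, -⟩
        rw [hgx0] at hsg
        linarith
      rw [lintegral_congr hz0, lintegral_zero]
      exact zero_le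
  -- Piece B
  have hPB : (∫⁻ x in E, ∫⁻ s, FB (x, s))
      ≤ ENNReal.ofReal σ * ENNReal.ofReal lam * I₁ := by
    calc (∫⁻ x in E, ∫⁻ s, FB (x, s))
        ≤ ∫⁻ x, ∫⁻ s, FB (x, s) := setLIntegral_le_lintegral _ _
      _ = ∫⁻ s, ∫⁻ x, FB (x, s) := lintegral_lintegral_swap hFBm.aemeasurable
      _ ≤ ∫⁻ s, (Ioi (0:ℝ)).indicator
          (fun s => ENNReal.ofReal σ * (ENNReal.ofReal lam
            * ENNReal.ofReal (ψ s ^ (1/(n:ℝ))))) s := by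
          refine lintegral_mono fun s => ?_
          by_cases hs : 0 < s
          · rw [indicator_of_mem (mem_Ioi.mpr hs)]
            have h1 : ∀ x, FB (x, s) ≤ (closedBall z (lam * ψ s ^ (1/(n:ℝ)))).indicator c x := by
              intro x
              rw [hFB]
              simp only
              split_ifs with h
              · rw [indicator_of_mem (mem_closedBall_iff_norm.mpr h.2.2)]
              · exact zero_le
            calc ∫⁻ x, FB (x, s)
                ≤ ∫⁻ x, (closedBall z (lam * ψ s ^ (1/(n:ℝ)))).indicator c x :=
                  lintegral_mono h1
              _ = ∫⁻ x in closedBall z (lam * ψ s ^ (1/(n:ℝ))), c x :=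
                  lintegral_indicator measurableSet_closedBall _
              _ = (n : ℝ≥0∞) * volume (ball (0 : EuclideanSpace ℝ (Fin n)) 1)
                  * ENNReal.ofReal (lam * ψ s ^ (1/(n:ℝ))) := my_ball_int n hn z _
              _ = ENNReal.ofReal σ * (ENNReal.ofReal lam
                  * ENNReal.ofReal (ψ s ^ (1/(n:ℝ)))) := by
                  rw [hσ, show ENNReal.ofReal ((n:ℝ)
                      * (volume (ball (0 : EuclideanSpace ℝ (Fin n)) 1)).toReal)
                      = (n : ℝ≥0∞) * volume (ball (0 : EuclideanSpace ℝ (Fin n)) 1) from by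
                        rw [ENNReal.ofReal_mul (by positivity), ENNReal.ofReal_natCast,
                          ENNReal.ofReal_toReal measure_ball_lt_top.ne],
                    ENNReal.ofReal_mul hlam0.le, mul_assoc]
          · rw [indicator_of_notMem (fun h => hs (mem_Ioi.mp h))]
            have hz0 : ∀ x, FB (x, s) = 0 := fun x => by
              rw [hFB]; exact if_neg (fun h => hs h.1)
            rw [lintegral_congr hz0, lintegral_zero]
      _ = ENNReal.ofReal σ * ENNReal.ofReal lam * I₁ := by
          rw [lintegral_indicator measurableSet_Ioi,
            lintegral_const_mul' _ _ ENNReal.ofReal_ne_top,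
            lintegral_const_mul' _ _ ENNReal.ofReal_ne_top, hI₁ψ, mul_assoc]
  -- Combine
  set M : ℝ := a ^ (1/(n:ℝ)) * b ^ (1 - 1/(n:ℝ)) with hM
  have hMpos : 0 < M := mul_pos (Real.rpow_pos_of_pos ha _) (Real.rpow_pos_of_pos hb _)
  have hmain : (∫⁻ x in E, ENNReal.ofReal (‖x - z‖ ^ (1 - (n : ℝ)) * g x))
      ≤ ENNReal.ofReal ((1 + σ) * M) := by
    rw [hLHS]
    refine (add_le_add hPA hPB).trans_eq ?_
    rw [hI₂a, hI₁b, ← ENNReal.ofReal_mul (Real.rpow_nonneg hlam0.le _),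
      ← ENNReal.ofReal_mul hσ0, ← ENNReal.ofReal_mul (mul_nonneg hσ0 hlam0.le),
      ← ENNReal.ofReal_add (mul_nonneg (Real.rpow_nonneg hlam0.le _) ha.le)
        (mul_nonneg (mul_nonneg hσ0 hlam0.le) hb.le)]
    congr 1
    -- real computation
    have h1 : lam ^ (1 - (n:ℝ)) = a ^ (1/(n:ℝ) - 1) * b ^ (1 - 1/(n:ℝ)) := by
      rw [hlam_def, ← Real.rpow_mul (div_pos ha hb).le]
      have hexp : (1/(n:ℝ)) * (1 - (n:ℝ)) = 1/(n:ℝ) - 1 := by field_simp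
      rw [hexp, Real.div_rpow ha.le hb.le, div_eq_mul_inv, ← Real.rpow_neg hb.le]
      congr 2
      ring
    have h2 : lam * b = a ^ (1/(n:ℝ)) * b ^ (1 - 1/(n:ℝ)) := by
      rw [hlam_def, Real.div_rpow ha.le hb.le, div_mul_eq_mul_div, mul_div_assoc]
      congr 1
      rw [Real.rpow_sub hb, Real.rpow_one]
    have h3 : a ^ (1/(n:ℝ) - 1) * a = a ^ (1/(n:ℝ)) := by
      nth_rewrite 2 [← Real.rpow_one a]
      rw [← Real.rpow_add ha]
      norm_num
    rw [h1, hM]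
    calc a ^ (1/(n:ℝ) - 1) * b ^ (1 - 1/(n:ℝ)) * a + σ * lam * b
        = (a ^ (1/(n:ℝ) - 1) * a) * b ^ (1 - 1/(n:ℝ)) + σ * (lam * b) := by ring
      _ = a ^ (1/(n:ℝ)) * b ^ (1 - 1/(n:ℝ)) + σ * (a ^ (1/(n:ℝ)) * b ^ (1 - 1/(n:ℝ))) := by
          rw [h3, h2]
      _ = (1 + σ) * (a ^ (1/(n:ℝ)) * b ^ (1 - 1/(n:ℝ))) := by ring
  -- Endgame
  calc (∫⁻ x in E, ENNReal.ofReal (‖x - z‖ ^ (1 - (n : ℝ)) * g x)) ^ (n:ℝ)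
      ≤ (ENNReal.ofReal ((1 + σ) * M)) ^ (n:ℝ) :=
        ENNReal.rpow_le_rpow hmain (by positivity)
    _ = ENNReal.ofReal (((1 + σ) * M) ^ (n:ℝ)) :=
        ENNReal.ofReal_rpow_of_pos (by positivity)
    _ = ENNReal.ofReal ((1 + σ) ^ n * (a * b ^ ((n:ℝ) - 1))) := by
        congr 1
        rw [Real.mul_rpow (by positivity) hMpos.le, hM,
          Real.mul_rpow (Real.rpow_nonneg ha.le _) (Real.rpow_nonneg hb.le _),
          ← Real.rpow_natCast (1 + σ) n, ← Real.rpow_mul ha.le, ← Real.rpow_mul hb.le]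
        have e1 : (1/(n:ℝ)) * (n:ℝ) = 1 := by field_simp
        have e2 : (1 - 1/(n:ℝ)) * (n:ℝ) = (n:ℝ) - 1 := by field_simp
        rw [e1, e2, Real.rpow_one]
    _ = ENNReal.ofReal ((1 + σ) ^ n) * I₁ ^ ((n:ℝ) - 1) * I₂ := by
        rw [ENNReal.ofReal_mul (by positivity),
          ENNReal.ofReal_mul ha.le, hI₂a, hI₁b,
          ENNReal.ofReal_rpow_of_pos hb]
        ring
end

section
/- Uniform L^p bound for horizontal difference quotients of smooth Sobolev functions along a left-invariant vector field: let 𝔾 = (ℝⁿ,·) be a Carnot group with generating horizontal vector fields X₁,…,X_{m₁}, let Ω ⊆ 𝔾 be open, f ∈ C^∞(Ω) with X_i f ∈ L^p(Ω) for some 1 ≤ p < ∞, let Ω' ⋐ Ω and 0 < |h| < dist(Ω', ∂Ω). Then the difference quotient D_i^h f(x) := (f(exp(hX_i)(x)) − f(x))/h satisfies ‖D_i^h f‖_{L^p(Ω')} ≤ ‖X_i f‖_{L^p(Ω)}. -/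
open MeasureTheory Metric Set ENNReal Filter

/-! ### Auxiliary lemmas -/

/-- A lintegral comparison over `μ.restrict s` (with `s` possibly non-measurable):
if `A ≤ B` holds (a.e.) on `s` and `B` is measurable, then the lintegrals compare. -/
lemma lemX {α : Type*} [MeasurableSpace α] (μ : Measure α) (s : Set α)
    (A B : α → ℝ≥0∞) (hB : Measurable B)
    (hAB : ∀ᵐ x ∂μ.restrict s, x ∈ s → A x ≤ B x) :
    ∫⁻ x, A x ∂μ.restrict s ≤ ∫⁻ x, B x ∂μ.restrict s := by
  have key : ∀ φ : SimpleFunc α ℝ≥0∞, (⇑φ ≤ fun x => A x) →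
      φ.lintegral (μ.restrict s) ≤ ∫⁻ x, B x ∂μ.restrict s := by
    intro φ hφ
    have hnull : (μ.restrict s) {x | B x < φ x} = 0 := by
      have hm : MeasurableSet {x | B x < φ x} := measurableSet_lt hB φ.measurable
      rw [Measure.restrict_apply hm]
      have hsub : {x | B x < φ x} ∩ s ⊆ {x | ¬(x ∈ s → A x ≤ B x)} := by
        rintro x ⟨hx1, hx2⟩ hcon
        exact absurd (le_trans (hφ x) (hcon hx2)) (not_le.2 hx1)
      have hle : μ ({x | B x < φ x} ∩ s) ≤ 0 := by
        calc μ ({x | B x < φ x} ∩ s)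
            = (μ.restrict s) ({x | B x < φ x} ∩ s) :=
              (Measure.restrict_eq_self μ inter_subset_right).symm
          _ ≤ (μ.restrict s) {x | ¬(x ∈ s → A x ≤ B x)} := measure_mono hsub
          _ = 0 := ae_iff.1 hAB
      exact le_antisymm hle zero_le
    have h1 : ∫⁻ x, φ x ∂μ.restrict s = ∫⁻ x, min (φ x) (B x) ∂μ.restrict s := by
      apply lintegral_congr_ae
      rw [Filter.EventuallyEq, ae_iff]
      refine measure_mono_null (fun x hx => ?_) hnull
      simp only [mem_setOf_eq] at hx ⊢
      by_contra hc
      push_neg at hc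
      exact hx (by rw [min_eq_left hc])
    calc φ.lintegral (μ.restrict s) = ∫⁻ x, φ x ∂μ.restrict s :=
          (φ.lintegral_eq_lintegral _).symm
      _ = ∫⁻ x, min (φ x) (B x) ∂μ.restrict s := h1
      _ ≤ ∫⁻ x, B x ∂μ.restrict s := lintegral_mono fun x => min_le_right _ _
  rw [lintegral_def]
  exact iSup₂_le key

/-- Jensen's inequality for the power function on a probability measure,
via Hölder's inequality. -/
lemma jensen_pow {α : Type*} [MeasurableSpace α] (μ : Measure α) (hμ : μ univ = 1)
    (w : α → ℝ≥0∞) (hw : AEMeasurable w μ) (p : ℝ) (hp : 1 ≤ p) :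
    (∫⁻ x, w x ∂μ) ^ p ≤ ∫⁻ x, w x ^ p ∂μ := by
  rcases eq_or_lt_of_le hp with h1 | h1
  · simp [← h1]
  · have hp0 : (0:ℝ) < p := lt_trans zero_lt_one h1
    have hpq : p.HolderConjugate (Real.conjExponent p) := Real.HolderConjugate.conjExponent h1
    have hH := ENNReal.lintegral_mul_le_Lp_mul_Lq μ hpq hw
      (aemeasurable_const : AEMeasurable (fun _ => (1:ℝ≥0∞)) μ)
    simp only [Pi.mul_apply, mul_one, ENNReal.one_rpow, lintegral_one, hμ,
      ENNReal.one_rpow] at hH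
    calc (∫⁻ x, w x ∂μ) ^ p ≤ ((∫⁻ x, w x ^ p ∂μ) ^ (1/p)) ^ p :=
          ENNReal.rpow_le_rpow hH (le_of_lt hp0)
      _ = ∫⁻ x, w x ^ p ∂μ := by
          rw [← ENNReal.rpow_mul, one_div, inv_mul_cancel₀ (ne_of_gt hp0),
            ENNReal.rpow_one]

/-- The straddle lemma: two-sided difference quotients converge to the derivative. -/
lemma straddle {u : ℝ → ℝ} {s d : ℝ} (hu : HasDerivAt u d s) {a b : ℕ → ℝ}
    (ha : ∀ m, a m ≤ s) (hb : ∀ m, s ≤ b m) (hlt : ∀ m, a m < b m)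
    (h0 : Tendsto (fun m => b m - a m) atTop (nhds 0)) :
    Tendsto (fun m => (u (b m) - u (a m)) / (b m - a m)) atTop (nhds d) := by
  have hta : Tendsto a atTop (nhds s) := by
    have h1 : Tendsto (fun m => s - (b m - a m)) atTop (nhds (s - 0)) :=
      tendsto_const_nhds.sub h0
    rw [sub_zero] at h1
    exact tendsto_of_tendsto_of_tendsto_of_le_of_le h1 tendsto_const_nhds
      (fun m => by linarith [hb m]) (fun m => ha m)
  have htb : Tendsto b atTop (nhds s) := by
    have h1 : Tendsto (fun m => s + (b m - a m)) atTop (nhds (s + 0)) :=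
      tendsto_const_nhds.add h0
    rw [add_zero] at h1
    exact tendsto_of_tendsto_of_tendsto_of_le_of_le tendsto_const_nhds h1
      (fun m => hb m) (fun m => by linarith [ha m])
  rw [Metric.tendsto_atTop]
  intro ε hε
  have hlo := (hasDerivAt_iff_isLittleO.1 hu).def (show (0:ℝ) < ε/3 by linarith)
  obtain ⟨N, hN⟩ := eventually_atTop.1 ((hta.eventually hlo).and (htb.eventually hlo))
  refine ⟨N, fun m hm => ?_⟩
  obtain ⟨h1, h2⟩ := hN m hm
  have hba : 0 < b m - a m := sub_pos.2 (hlt m)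
  have e1 : |u (b m) - u s - (b m - s) * d| ≤ ε/3 * (b m - s) := by
    rw [Real.norm_eq_abs, Real.norm_eq_abs, smul_eq_mul,
      abs_of_nonneg (by linarith [hb m] : (0:ℝ) ≤ b m - s)] at h2
    exact h2
  have e2 : |u (a m) - u s - (a m - s) * d| ≤ ε/3 * (s - a m) := by
    rw [Real.norm_eq_abs, Real.norm_eq_abs, smul_eq_mul, abs_sub_comm (a m) s,
      abs_of_nonneg (by linarith [ha m] : (0:ℝ) ≤ s - a m)] at h1
    exact h1
  have hqe : (u (b m) - u (a m)) / (b m - a m) - d =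
      ((u (b m) - u s - (b m - s) * d) - (u (a m) - u s - (a m - s) * d)) / (b m - a m) := by
    have hne : b m - a m ≠ 0 := ne_of_gt hba
    field_simp
    ring
  have key : |(u (b m) - u (a m)) / (b m - a m) - d| ≤ 2*ε/3 := by
    rw [hqe, abs_div, abs_of_pos hba, div_le_iff₀ hba]
    calc |(u (b m) - u s - (b m - s) * d) - (u (a m) - u s - (a m - s) * d)|
        ≤ |u (b m) - u s - (b m - s) * d| + |u (a m) - u s - (a m - s) * d| := abs_sub _ _
      _ ≤ ε/3 * (b m - s) + ε/3 * (s - a m) := add_le_add e1 e2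
      _ = ε/3 * (b m - a m) := by ring
      _ ≤ 2*ε/3 * (b m - a m) := by nlinarith
  calc dist ((u (b m) - u (a m)) / (b m - a m)) d
      = |(u (b m) - u (a m)) / (b m - a m) - d| := Real.dist_eq _ _
    _ ≤ 2*ε/3 := key
    _ < ε := by linarith

/-- Measurable version of an indicator of a function continuous on an open set. -/
lemma measurable_indicatorOn {X : Type*} [TopologicalSpace X] [MeasurableSpace X]
    [OpensMeasurableSpace X] {Ω : Set X} (hΩ : IsOpen Ω) {f : X → ℝ}
    (hf : ContinuousOn f Ω) : Measurable (Ω.indicator f) := by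
  apply measurable_of_isOpen
  intro U hU
  by_cases h0 : (0:ℝ) ∈ U
  · have hset : Ω.indicator f ⁻¹' U = (Ω ∩ f ⁻¹' U) ∪ Ωᶜ := by
      ext x
      by_cases hx : x ∈ Ω <;> simp [Set.indicator_apply, hx, h0]
    rw [hset]
    exact ((hf.isOpen_inter_preimage hΩ hU).measurableSet).union hΩ.measurableSet.compl
  · have hset : Ω.indicator f ⁻¹' U = Ω ∩ f ⁻¹' U := by
      ext x
      by_cases hx : x ∈ Ω <;> simp [Set.indicator_apply, hx, h0]
    rw [hset]
    exact (hf.isOpen_inter_preimage hΩ hU).measurableSet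

/-! ### Grid difference quotients -/

/-- Upper grid point. -/
noncomputable def bq (s : ℝ) (m : ℕ) : ℝ := ((⌈((m:ℝ)+1) * s⌉ : ℤ) : ℝ) / ((m:ℝ)+1)

/-- Lower grid point. -/
noncomputable def aq (s : ℝ) (m : ℕ) : ℝ := (((⌈((m:ℝ)+1) * s⌉ : ℤ) : ℝ) - 1) / ((m:ℝ)+1)

lemma m1_pos (m : ℕ) : (0:ℝ) < (m:ℝ)+1 := by positivity

lemma le_bq (s : ℝ) (m : ℕ) : s ≤ bq s m := by
  rw [bq, le_div_iff₀ (m1_pos m), mul_comm]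
  exact Int.le_ceil _

lemma aq_le (s : ℝ) (m : ℕ) : aq s m ≤ s := by
  rw [aq, div_le_iff₀ (m1_pos m)]
  have h1 : ((⌈((m:ℝ)+1) * s⌉ : ℤ) : ℝ) < ((m:ℝ)+1) * s + 1 := Int.ceil_lt_add_one _
  nlinarith
lemma aq_nonneg {s : ℝ} (hs : 0 < s) (m : ℕ) : 0 ≤ aq s m := by
  have h1 : (1:ℤ) ≤ ⌈((m:ℝ)+1) * s⌉ := by
    have hpos : (0:ℝ) < ((m:ℝ)+1) * s := mul_pos (m1_pos m) hs
    have h2 := Int.le_ceil (((m:ℝ)+1) * s)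
    have h3 : (0:ℝ) < ((⌈((m:ℝ)+1) * s⌉ : ℤ) : ℝ) := lt_of_lt_of_le hpos h2
    exact_mod_cast h3
  have h1' : (1:ℝ) ≤ ((⌈((m:ℝ)+1) * s⌉ : ℤ) : ℝ) := by exact_mod_cast h1
  exact div_nonneg (by linarith) (le_of_lt (m1_pos m))

lemma bq_le_one {s : ℝ} (hs : s ≤ 1) (m : ℕ) : bq s m ≤ 1 := by
  rw [bq, div_le_one (m1_pos m)]
  have h1 : ⌈((m:ℝ)+1) * s⌉ ≤ ((m:ℤ)+1) := by
    apply Int.ceil_le.2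
    push_cast
    nlinarith [m1_pos m]
  exact_mod_cast h1

lemma bq_sub_aq (s : ℝ) (m : ℕ) : bq s m - aq s m = 1/((m:ℝ)+1) := by
  rw [bq, aq, div_sub_div_same]
  ring_nf

lemma aq_lt_bq (s : ℝ) (m : ℕ) : aq s m < bq s m := by
  rw [← sub_pos, bq_sub_aq]
  positivity

/-- The grid difference quotient function (jointly measurable in `(x, s)`). -/
noncomputable def Dq (n : ℕ) (T : ℝ → (Fin n → ℝ) → (Fin n → ℝ))
    (f₀ : (Fin n → ℝ) → ℝ) (h : ℝ) (m : ℕ) (q : (Fin n → ℝ) × ℝ) : ℝ :=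
  ((m:ℝ)+1) * (f₀ (T (h * bq q.2 m) q.1) - f₀ (T (h * aq q.2 m) q.1))

/-- The limiting integrand. -/
noncomputable def Gq (n : ℕ) (T : ℝ → (Fin n → ℝ) → (Fin n → ℝ))
    (f₀ : (Fin n → ℝ) → ℝ) (h p : ℝ) (q : (Fin n → ℝ) × ℝ) : ℝ≥0∞ :=
  liminf (fun m : ℕ => ((‖Dq n T f₀ h m q / h‖₊ : ℝ≥0∞)) ^ p) atTop

lemma measurable_Dq {n : ℕ} {T : ℝ → (Fin n → ℝ) → (Fin n → ℝ)}
    {f₀ : (Fin n → ℝ) → ℝ} {h : ℝ} (hT : ∀ t, Measurable (T t))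
    (hf₀ : Measurable f₀) (m : ℕ) : Measurable (Dq n T f₀ h m) := by
  have hrepr : Dq n T f₀ h m = (fun r : (Fin n → ℝ) × ℤ =>
      ((m:ℝ)+1) * (f₀ (T (h * ((r.2 : ℝ) / ((m:ℝ)+1))) r.1)
        - f₀ (T (h * (((r.2 : ℝ) - 1) / ((m:ℝ)+1))) r.1)))
      ∘ (fun q : (Fin n → ℝ) × ℝ => (q.1, ⌈((m:ℝ)+1) * q.2⌉)) := rfl
  rw [hrepr]
  refine (measurable_from_prod_countable_left fun j : ℤ => ?_).comp
    (measurable_fst.prodMk (Int.measurable_ceil.comp (measurable_snd.const_mul _)))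
  show Measurable fun x : Fin n → ℝ => ((m:ℝ)+1) *
    (f₀ (T (h * ((j : ℝ) / ((m:ℝ)+1))) x) - f₀ (T (h * (((j : ℝ) - 1) / ((m:ℝ)+1))) x))
  exact ((hf₀.comp (hT _)).sub (hf₀.comp (hT _))).const_mul _

lemma measurable_Gq {n : ℕ} {T : ℝ → (Fin n → ℝ) → (Fin n → ℝ)}
    {f₀ : (Fin n → ℝ) → ℝ} {h p : ℝ} (hT : ∀ t, Measurable (T t))
    (hf₀ : Measurable f₀) : Measurable (Gq n T f₀ h p) := by
  apply Measurable.liminf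
  intro m
  exact (ENNReal.continuous_rpow_const.measurable).comp
    (((measurable_Dq hT hf₀ m).div_const h).nnnorm.coe_nnreal_ennreal)

/-- Evaluation of `Gq` at good points. -/
lemma Gq_eval {n : ℕ} {T : ℝ → (Fin n → ℝ) → (Fin n → ℝ)}
    {f₀ f Xif : (Fin n → ℝ) → ℝ} {h p s : ℝ} {x : Fin n → ℝ}
    (hh : h ≠ 0) (hs : s ∈ Ioc (0:ℝ) 1)
    (hind : ∀ r : ℝ, 0 ≤ r → r ≤ 1 → f₀ (T (h * r) x) = f (T (h * r) x))
    (hds : HasDerivAt (fun s' : ℝ => f (T (h * s') x)) (h * Xif (T (h * s) x)) s) :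
    Gq n T f₀ h p (x, s) = ((‖Xif (T (h * s) x)‖₊ : ℝ≥0∞)) ^ p := by
  have hDqm : ∀ m, Dq n T f₀ h m (x, s) =
      (f (T (h * bq s m) x) - f (T (h * aq s m) x)) / (bq s m - aq s m) := by
    intro m
    have e1 : f₀ (T (h * bq s m) x) = f (T (h * bq s m) x) :=
      hind _ (le_trans (le_of_lt hs.1) (le_bq s m)) (bq_le_one hs.2 m)
    have e2 : f₀ (T (h * aq s m) x) = f (T (h * aq s m) x) :=
      hind _ (aq_nonneg hs.1 m) (le_trans (aq_le s m) hs.2)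
    show ((m:ℝ)+1) * (f₀ (T (h * bq s m) x) - f₀ (T (h * aq s m) x)) = _
    rw [e1, e2, bq_sub_aq, one_div, div_eq_mul_inv, inv_inv, mul_comm]
  have hstr := straddle hds (aq_le s) (le_bq s) (aq_lt_bq s)
    (by simp only [bq_sub_aq]; exact tendsto_one_div_add_atTop_nhds_zero_nat)
  have hDlim : Tendsto (fun m => Dq n T f₀ h m (x, s)) atTop
      (nhds (h * Xif (T (h * s) x))) := by
    simp only [hDqm]
    exact hstr
  have hdiv : Tendsto (fun m => Dq n T f₀ h m (x, s) / h) atTop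
      (nhds (Xif (T (h * s) x))) := by
    have := hDlim.div_const h
    rwa [mul_div_cancel_left₀ _ hh] at this
  have hcont : Tendsto (fun m => ((‖Dq n T f₀ h m (x, s) / h‖₊ : ℝ≥0∞)) ^ p) atTop
      (nhds (((‖Xif (T (h * s) x)‖₊ : ℝ≥0∞)) ^ p)) :=
    (ENNReal.continuous_rpow_const.tendsto _).comp
      (((ENNReal.continuous_coe.comp continuous_nnnorm).tendsto _).comp hdiv)
  exact hcont.liminf_eq

/-- uniform `L^p` bound for horizontal difference quotients of a smooth
Sobolev function along the flow `T` of a left-invariant (measure-preserving) horizontal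
vector field on a Carnot group `𝔾 ≡ ℝⁿ`: if `Xif` is the derivative of `f` along the
flow, `Ω' ⋐ Ω` (so that `T t x ∈ Ω` for `x ∈ Ω'` and `|t| ≤ |h|`), then
`‖(f ∘ T_h − f)/h‖_{L^p(Ω')} ≤ ‖X_i f‖_{L^p(Ω)}`. -/
theorem stmt_17 (n : ℕ) (Ω Ω' : Set (Fin n → ℝ)) (hΩ : IsOpen Ω) (hΩ' : Ω' ⊆ Ω)
    (T : ℝ → (Fin n → ℝ) → (Fin n → ℝ))
    (hT0 : ∀ x, T 0 x = x)
    (hTflow : ∀ (a b : ℝ) (x : Fin n → ℝ), T (a + b) x = T b (T a x))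
    (hTmp : ∀ t : ℝ, MeasurePreserving (T t) volume volume)
    (f Xif : (Fin n → ℝ) → ℝ)
    (hf : ContDiffOn ℝ (⊤ : ℕ∞) f Ω)
    (hderiv : ∀ x ∈ Ω, HasDerivAt (fun t : ℝ => f (T t x)) (Xif x) 0)
    (p : ℝ) (hp : 1 ≤ p)
    (hXif : MemLp Xif (ENNReal.ofReal p) (volume.restrict Ω))
    (h : ℝ) (hh : h ≠ 0)
    (hreach : ∀ x ∈ Ω', ∀ t : ℝ, |t| ≤ |h| → T t x ∈ Ω) :
    eLpNorm (fun x => (f (T h x) - f x) / h) (ENNReal.ofReal p) (volume.restrict Ω')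
      ≤ eLpNorm Xif (ENNReal.ofReal p) (volume.restrict Ω) := by
  classical
  have hp0 : (0:ℝ) < p := lt_of_lt_of_le one_pos hp
  have hTm : ∀ t : ℝ, Measurable (T t) := fun t => (hTmp t).measurable
  set f₀ : (Fin n → ℝ) → ℝ := Ω.indicator f with hf₀def
  have hf₀ : Measurable f₀ := measurable_indicatorOn hΩ hf.continuousOn
  have hab : ∀ r : ℝ, 0 ≤ r → r ≤ 1 → |h * r| ≤ |h| := by
    intro r h0 h1'
    rw [abs_mul, abs_of_nonneg h0]
    nlinarith [abs_nonneg h]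
  have hνuniv : ((volume : Measure ℝ).restrict (Ioc (0:ℝ) 1)) univ = 1 := by
    rw [Measure.restrict_apply_univ, Real.volume_Ioc]
    norm_num
  -- the derivative of `f` along the flow, at all times in `[-1, 1]`
  have hud : ∀ x, (∀ t : ℝ, |t| ≤ |h| → T t x ∈ Ω) → ∀ s ∈ Icc (-1:ℝ) 1,
      HasDerivAt (fun s' : ℝ => f (T (h * s') x)) (h * Xif (T (h * s) x)) s := by
    intro x hx s hs
    have hsh : |h * s| ≤ |h| := by
      rw [abs_mul]
      have : |s| ≤ 1 := abs_le.2 ⟨hs.1, hs.2⟩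
      nlinarith [abs_nonneg h]
    have hy : T (h * s) x ∈ Ω := hx _ hsh
    have hd0 := hderiv _ hy
    have hlin : HasDerivAt (fun s' : ℝ => h * (s' - s)) h s := by
      simpa using ((hasDerivAt_id s).sub_const s).const_mul h
    have hd0' : HasDerivAt (fun t : ℝ => f (T t (T (h * s) x))) (Xif (T (h * s) x))
        (h * (s - s)) := by
      simpa using hd0
    have hcomp := HasDerivAt.comp s hd0' hlin
    have heq : ((fun t : ℝ => f (T t (T (h * s) x))) ∘ (fun s' : ℝ => h * (s' - s)))
        = fun s' : ℝ => f (T (h * s') x) := by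
      funext s'
      show f (T (h * (s' - s)) (T (h * s) x)) = f (T (h * s') x)
      rw [← hTflow (h * s) (h * (s' - s)) x, show h * s + h * (s' - s) = h * s' by ring]
    rw [heq] at hcomp
    simpa [mul_comm] using hcomp
  -- pointwise bound: FTC + Jensen
  have step1 : ∀ x ∈ Ω', ((‖(f (T h x) - f x) / h‖₊ : ℝ≥0∞)) ^ p
      ≤ ∫⁻ s in Ioc (0:ℝ) 1, Gq n T f₀ h p (x, s) := by
    intro x hx
    have hxr : ∀ t : ℝ, |t| ≤ |h| → T t x ∈ Ω := hreach x hx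
    have hder := hud x hxr
    have hGx : ∀ s ∈ Ioc (0:ℝ) 1, Gq n T f₀ h p (x, s)
        = ((‖Xif (T (h * s) x)‖₊ : ℝ≥0∞)) ^ p := by
      intro s hs
      exact Gq_eval hh hs
        (fun r h0 h1' => indicator_of_mem (hxr (h * r) (hab r h0 h1')) f)
        (hder s ⟨by linarith [hs.1], hs.2⟩)
    have hGeq : ∫⁻ s in Ioc (0:ℝ) 1, Gq n T f₀ h p (x, s)
        = ∫⁻ s in Ioc (0:ℝ) 1, ((‖Xif (T (h * s) x)‖₊ : ℝ≥0∞)) ^ p :=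
      setLIntegral_congr_fun measurableSet_Ioc hGx
    rw [hGeq]
    by_cases hfin : ∫⁻ s in Ioc (0:ℝ) 1, ((‖Xif (T (h * s) x)‖₊ : ℝ≥0∞)) ^ p = ⊤
    · rw [hfin]; exact le_top
    -- measurability of the flow derivative in time
    have hvm : AEMeasurable (fun s : ℝ => Xif (T (h * s) x))
        ((volume : Measure ℝ).restrict (Ioc (0:ℝ) 1)) := by
      have hdm : Measurable (fun s : ℝ => deriv (fun s' : ℝ => f (T (h * s') x)) s / h) :=
        (measurable_deriv _).div_const h
      refine hdm.aemeasurable.congr ?_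
      filter_upwards [ae_restrict_mem measurableSet_Ioc] with s hs
      rw [(hder s ⟨by linarith [hs.1], hs.2⟩).deriv, mul_div_cancel_left₀ _ hh]
    have hvint : Integrable (fun s : ℝ => Xif (T (h * s) x))
        ((volume : Measure ℝ).restrict (Ioc (0:ℝ) 1)) := by
      constructor
      · exact hvm.aestronglyMeasurable
      · rw [hasFiniteIntegral_def]
        have hbnd : ∀ s : ℝ, ((‖Xif (T (h * s) x)‖₊ : ℝ≥0∞))
            ≤ 1 + ((‖Xif (T (h * s) x)‖₊ : ℝ≥0∞)) ^ p := by
          intro s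
          rcases le_total ((‖Xif (T (h * s) x)‖₊ : ℝ≥0∞)) 1 with hc | hc
          · exact le_trans hc le_self_add
          · calc ((‖Xif (T (h * s) x)‖₊ : ℝ≥0∞))
                = ((‖Xif (T (h * s) x)‖₊ : ℝ≥0∞)) ^ (1:ℝ) := (ENNReal.rpow_one _).symm
              _ ≤ ((‖Xif (T (h * s) x)‖₊ : ℝ≥0∞)) ^ p :=
                  ENNReal.rpow_le_rpow_of_exponent_le hc hp
              _ ≤ 1 + ((‖Xif (T (h * s) x)‖₊ : ℝ≥0∞)) ^ p := le_add_self
        calc ∫⁻ s in Ioc (0:ℝ) 1, ((‖Xif (T (h * s) x)‖₊ : ℝ≥0∞))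
            ≤ ∫⁻ s in Ioc (0:ℝ) 1, (1 + ((‖Xif (T (h * s) x)‖₊ : ℝ≥0∞)) ^ p) :=
              lintegral_mono hbnd
          _ = 1 + ∫⁻ s in Ioc (0:ℝ) 1, ((‖Xif (T (h * s) x)‖₊ : ℝ≥0∞)) ^ p := by
              rw [lintegral_add_left measurable_const, lintegral_one, hνuniv]
          _ < ⊤ := ENNReal.add_lt_top.2 ⟨ENNReal.one_lt_top, lt_top_iff_ne_top.2 hfin⟩
    -- FTC
    have hint : IntervalIntegrable (fun s : ℝ => h * Xif (T (h * s) x)) volume 0 1 := by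
      rw [intervalIntegrable_iff, uIoc_of_le (zero_le_one)]
      exact hvint.const_mul h
    have hftc := intervalIntegral.integral_eq_sub_of_hasDerivAt
      (f := fun s' : ℝ => f (T (h * s') x)) (f' := fun s : ℝ => h * Xif (T (h * s) x))
      (fun s hs => by
        rw [uIcc_of_le zero_le_one] at hs
        exact hder s ⟨by linarith [hs.1], hs.2⟩) hint
    simp only [mul_one, mul_zero, hT0 x] at hftc
    rw [intervalIntegral.integral_of_le zero_le_one, MeasureTheory.integral_const_mul] at hftc
    have hval : (f (T h x) - f x) / h = ∫ s in Ioc (0:ℝ) 1, Xif (T (h * s) x) := by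
      rw [← hftc, mul_div_cancel_left₀ _ hh]
    rw [hval]
    calc ((‖∫ s in Ioc (0:ℝ) 1, Xif (T (h * s) x)‖₊ : ℝ≥0∞)) ^ p
        ≤ (∫⁻ s in Ioc (0:ℝ) 1, ((‖Xif (T (h * s) x)‖₊ : ℝ≥0∞))) ^ p :=
          ENNReal.rpow_le_rpow (enorm_integral_le_lintegral_enorm _) (le_of_lt hp0)
      _ ≤ ∫⁻ s in Ioc (0:ℝ) 1, ((‖Xif (T (h * s) x)‖₊ : ℝ≥0∞)) ^ p :=
          jensen_pow _ hνuniv _ hvm.enorm p hp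
  -- reduce `eLpNorm` to lintegrals
  have hpne : (ENNReal.ofReal p) ≠ 0 := by
    simp only [ne_eq, ENNReal.ofReal_eq_zero, not_le]
    exact hp0
  have hpnt : (ENNReal.ofReal p) ≠ ⊤ := ENNReal.ofReal_ne_top
  have htoReal : (ENNReal.ofReal p).toReal = p := ENNReal.toReal_ofReal (le_of_lt hp0)
  rw [eLpNorm_eq_lintegral_rpow_enorm_toReal hpne hpnt, eLpNorm_eq_lintegral_rpow_enorm_toReal hpne hpnt,
    htoReal]
  refine ENNReal.rpow_le_rpow ?_ (by positivity)
  -- main lintegral bound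
  have hGmeas : Measurable (Gq n T f₀ h p) := measurable_Gq hTm hf₀
  have hB1meas : Measurable (fun x => ∫⁻ s in Ioc (0:ℝ) 1, Gq n T f₀ h p (x, s)) :=
    hGmeas.lintegral_prod_right'
  have hstep : ∫⁻ x, ((‖(f (T h x) - f x) / h‖₊ : ℝ≥0∞)) ^ p ∂(volume.restrict Ω')
      ≤ ∫⁻ x, (∫⁻ s in Ioc (0:ℝ) 1, Gq n T f₀ h p (x, s)) ∂(volume.restrict Ω') :=
    lemX volume Ω' _ _ hB1meas (ae_of_all _ step1)
  refine le_trans hstep ?_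
  have hswap : ∫⁻ x, (∫⁻ s in Ioc (0:ℝ) 1, Gq n T f₀ h p (x, s)) ∂(volume.restrict Ω')
      = ∫⁻ s in Ioc (0:ℝ) 1, (∫⁻ x, Gq n T f₀ h p (x, s) ∂(volume.restrict Ω')) := by
    exact lintegral_lintegral_swap hGmeas.aemeasurable
  rw [hswap]
  -- measurable version of Xif
  have hXam : AEMeasurable Xif (volume.restrict Ω) := hXif.aestronglyMeasurable.aemeasurable
  set g : (Fin n → ℝ) → ℝ := hXam.mk Xif with hgdef
  have hgm : Measurable g := hXam.measurable_mk
  have hgae : Xif =ᵐ[volume.restrict Ω] g := hXam.ae_eq_mk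
  set M : Set (Fin n → ℝ) := toMeasurable (volume.restrict Ω) {z | Xif z ≠ g z} with hMdef
  have hMmeas : MeasurableSet M := measurableSet_toMeasurable _ _
  have hMnull : volume (M ∩ Ω) = 0 := by
    have hzero : (volume.restrict Ω) M = 0 := by
      rw [hMdef, measure_toMeasurable]
      exact ae_iff.1 hgae
    rwa [Measure.restrict_apply hMmeas] at hzero
  have hmgm : Measurable (fun z => ((‖g z‖₊ : ℝ≥0∞)) ^ p) :=
    (ENNReal.continuous_rpow_const.measurable).comp (hgm.nnnorm.coe_nnreal_ennreal)
  set J : ℝ≥0∞ := ∫⁻ z, ((‖Xif z‖₊ : ℝ≥0∞)) ^ p ∂(volume.restrict Ω) with hJdef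
  have hJg : ∫⁻ z, ((‖g z‖₊ : ℝ≥0∞)) ^ p ∂(volume.restrict Ω) = J := by
    rw [hJdef]
    apply lintegral_congr_ae
    filter_upwards [hgae] with z hz
    rw [hz]
  have hper : ∀ᵐ s ∂((volume : Measure ℝ).restrict (Ioc (0:ℝ) 1)),
      (∫⁻ x, Gq n T f₀ h p (x, s) ∂(volume.restrict Ω')) ≤ J := by
    filter_upwards [ae_restrict_mem measurableSet_Ioc] with s hs
    have hshs : |h * s| ≤ |h| := hab s (le_of_lt hs.1) hs.2
    -- the preimage of the bad set is null
    have hpre : (volume.restrict Ω') ((T (h * s)) ⁻¹' M) = 0 := by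
      rw [Measure.restrict_apply (hMmeas.preimage (hTm _))]
      have hss : (T (h * s)) ⁻¹' M ∩ Ω' ⊆ (T (h * s)) ⁻¹' (M ∩ Ω) :=
        fun x hx => ⟨hx.1, hreach x hx.2 _ hshs⟩
      refine measure_mono_null hss ?_
      rw [(hTmp (h * s)).measure_preimage (hMmeas.inter hΩ.measurableSet).nullMeasurableSet]
      exact hMnull
    have hae2 : ∀ᵐ x ∂(volume.restrict Ω'), x ∉ (T (h * s)) ⁻¹' M :=
      measure_eq_zero_iff_ae_notMem.1 hpre
    have hmaple : Measure.map (T (h * s)) (volume.restrict Ω') ≤ volume.restrict Ω := by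
      rw [Measure.le_iff]
      intro E hE
      rw [Measure.map_apply (hTm _) hE, Measure.restrict_apply (hE.preimage (hTm _)),
        Measure.restrict_apply hE]
      have hss : (T (h * s)) ⁻¹' E ∩ Ω' ⊆ (T (h * s)) ⁻¹' (E ∩ Ω) :=
        fun x hx => ⟨hx.1, hreach x hx.2 _ hshs⟩
      refine le_trans (measure_mono hss) ?_
      rw [(hTmp (h * s)).measure_preimage (hE.inter hΩ.measurableSet).nullMeasurableSet]
    refine le_trans (lemX volume Ω' _ (fun x => ((‖g (T (h * s) x)‖₊ : ℝ≥0∞)) ^ p)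
      (hmgm.comp (hTm _)) ?_) ?_
    · filter_upwards [hae2] with x hxM hxΩ'
      have hxr := hreach x hxΩ'
      rw [Gq_eval hh hs (fun r h0 h1' => indicator_of_mem (hxr _ (hab r h0 h1')) f)
        (hud x hxr s ⟨by linarith [hs.1], hs.2⟩)]
      have hxg : Xif (T (h * s) x) = g (T (h * s) x) := by
        by_contra hne
        exact hxM (subset_toMeasurable _ _ hne)
      rw [hxg]
    · calc ∫⁻ x, ((‖g (T (h * s) x)‖₊ : ℝ≥0∞)) ^ p ∂(volume.restrict Ω')
          = ∫⁻ z, ((‖g z‖₊ : ℝ≥0∞)) ^ p ∂(Measure.map (T (h * s)) (volume.restrict Ω')) :=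
            (lintegral_map hmgm (hTm _)).symm
        _ ≤ ∫⁻ z, ((‖g z‖₊ : ℝ≥0∞)) ^ p ∂(volume.restrict Ω) :=
            lintegral_mono' hmaple (le_refl _)
        _ = J := hJg
  calc ∫⁻ s in Ioc (0:ℝ) 1, (∫⁻ x, Gq n T f₀ h p (x, s) ∂(volume.restrict Ω'))
      ≤ ∫⁻ _ in Ioc (0:ℝ) 1, J := lintegral_mono_ae hper
    _ = J := by rw [lintegral_const, hνuniv, mul_one]
end
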